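/- arXiv:0901.1874 — 4 statements merged into one kernel-verified Lean document; each statement's English description precedes it below -/
import Mathlib

section
/- Let X be a compact metric space, (μ_n) a sequence of Borel probability measures on X, and α a Borel automorphism of X. Assume that for every continuous function g on X, the difference ∫ (g∘α) dμ_n − ∫ g dμ_n tends to 0 as n→∞. Suppose further there exists a sequence (X_m) of closed subsets of X such that the restriction of α to each X_m is continuous and lim_{m→∞} liminf_{n→∞} μ_n(X_m) = 1. Then any weak* limit point μ of (μ_n) is α-invariant, i.e. α_*μ = μ. -/
/-!
Fix a bounded continuous `g`, a closed set `F` on which `α` is continuous and on which the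
measures `μₙ` eventually put mass at least `c`. By Tietze, `g ∘ α` agrees on `F` with a bounded
continuous `h` with `‖h‖ ≤ ‖g‖`, so `∫ g ∘ α` and `∫ h` differ by at most `2‖g‖(1 - c)` for every
probability measure giving `F` mass at least `c`. This holds for the `μₙ`, and, `F` being closed,
also for the limit `μ` by the portmanteau theorem. Since `∫ h` is continuous in the measure and
`∫ g ∘ α dμₙ - ∫ g dμₙ → 0`, we get `|∫ g ∘ α dμ - ∫ g dμ| ≤ 4‖g‖(1 - c)`; letting `c → 1`,
`α_* μ` and `μ` integrate all bounded continuous functions alike.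
-/

open MeasureTheory Filter Topology BoundedContinuousFunction

theorem MeasureTheory.norm_integral_sub_integral_le_of_eqOn {X E : Type*} [MeasurableSpace X]
    [NormedAddCommGroup E] [NormedSpace ℝ E] {μ : Measure X} [IsFiniteMeasure μ] {u v : X → E}
    (hu : Integrable u μ) (hv : Integrable v μ) {s : Set X} (huv : Set.EqOn u v s) {C : ℝ}
    (hC : ∀ x ∉ s, ‖u x - v x‖ ≤ C) :
    ‖∫ x, u x ∂μ - ∫ x, v x ∂μ‖ ≤ C * μ.real sᶜ := by
  rw [← integral_sub hu hv, ← setIntegral_eq_integral_of_forall_compl_eq_zero (s := sᶜ)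
    fun x hx ↦ sub_eq_zero.2 (huv (not_not.1 hx))]
  exact norm_setIntegral_le_of_norm_le_const (measure_lt_top _ _) hC

theorem BoundedContinuousFunction.exists_norm_le_eqOn_comp {X Y : Type*} [TopologicalSpace X]
    [NormalSpace X] [TopologicalSpace Y] (g : Y →ᵇ ℝ) {α : X → Y} {F : Set X}
    (hF : IsClosed F) (hαF : ContinuousOn α F) :
    ∃ h : X →ᵇ ℝ, ‖h‖ ≤ ‖g‖ ∧ Set.EqOn h (g ∘ α) F := by
  obtain ⟨h, hnorm, hrestr⟩ := exists_norm_eq_domRestrict_eq_of_closed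
    (g.compContinuous ⟨F.domRestrict α, hαF.domRestrict⟩) hF
  exact ⟨h, hnorm.trans_le (g.norm_compContinuous_le _),
    fun x hx ↦ DFunLike.congr_fun hrestr ⟨x, hx⟩⟩

theorem MeasureTheory.ProbabilityMeasure.le_measureReal_of_tendsto_of_isClosed
    {Ω ι : Type*} {L : Filter ι} [L.NeBot] [MeasurableSpace Ω] [TopologicalSpace Ω]
    [OpensMeasurableSpace Ω] [HasOuterApproxClosed Ω] {μ : ProbabilityMeasure Ω}
    {μs : ι → ProbabilityMeasure Ω} (hμs : Tendsto μs L (𝓝 μ)) {F : Set Ω} (hF : IsClosed F)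
    {c : ℝ} (hc : ∀ᶠ i in L, c ≤ (μs i : Measure Ω).real F) :
    c ≤ (μ : Measure Ω).real F := by
  have hc' : ∀ᶠ i in L, ENNReal.ofReal c ≤ (μs i : Measure Ω) F :=
    hc.mono fun i hi ↦ (ENNReal.ofReal_le_iff_le_toReal (measure_ne_top _ _)).2 hi
  refine (ENNReal.ofReal_le_iff_le_toReal (measure_ne_top _ _)).1 ?_
  exact (le_limsup_of_frequently_le hc'.frequently).trans
    (limsup_measure_closed_le_of_tendsto hμs hF)

section

variable {X ι : Type*} [TopologicalSpace X] [NormalSpace X] [HasOuterApproxClosed X]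
  [MeasurableSpace X] [OpensMeasurableSpace X] {L : Filter ι} [L.NeBot]
  {ν : ι → ProbabilityMeasure X} {μ : ProbabilityMeasure X} {α : X → X}

theorem abs_integral_comp_sub_integral_le_of_tendsto (hν : Tendsto ν L (𝓝 μ))
    (hα : Measurable α) {F : Set X} (hF : IsClosed F) (hαF : ContinuousOn α F) {c : ℝ}
    (hc : ∀ᶠ i in L, c ≤ (ν i : Measure X).real F) (g : X →ᵇ ℝ)
    (hg : Tendsto (fun i ↦ ∫ x, g (α x) ∂(ν i : Measure X) - ∫ x, g x ∂(ν i : Measure X)) L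
      (𝓝 0)) :
    |∫ x, g (α x) ∂(μ : Measure X) - ∫ x, g x ∂(μ : Measure X)| ≤ 4 * ‖g‖ * (1 - c) := by
  obtain ⟨h, hh_norm, hh_eq⟩ := g.exists_norm_le_eqOn_comp hF hαF
  have hclose : ∀ ρ : ProbabilityMeasure X, c ≤ (ρ : Measure X).real F →
      |∫ x, g (α x) ∂(ρ : Measure X) - ∫ x, h x ∂(ρ : Measure X)| ≤ 2 * ‖g‖ * (1 - c) := by
    intro ρ hρ
    have hgα : Integrable (fun x ↦ g (α x)) (ρ : Measure X) :=
      (g.integrable _).comp_measurable hα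
    calc _ ≤ 2 * ‖g‖ * (ρ : Measure X).real Fᶜ :=
          norm_integral_sub_integral_le_of_eqOn hgα (h.integrable _) (fun x hx ↦ (hh_eq hx).symm)
            fun x _ ↦ (norm_sub_le _ _).trans (by
              linarith [g.norm_coe_le_norm (α x), h.norm_coe_le_norm x])
      _ ≤ 2 * ‖g‖ * (1 - c) := by
          rw [probReal_compl_eq_one_sub hF.measurableSet]
          gcongr
  have hlim : Tendsto (fun i ↦ ∫ x, g (α x) ∂(ν i : Measure X) - ∫ x, h x ∂(ν i : Measure X)) L
      (𝓝 (∫ x, g x ∂(μ : Measure X) - ∫ x, h x ∂(μ : Measure X))) := by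
    have hg' := ProbabilityMeasure.tendsto_iff_forall_integral_tendsto.1 hν g
    have hh' := ProbabilityMeasure.tendsto_iff_forall_integral_tendsto.1 hν h
    simpa using hg.add (hg'.sub hh')
  have hμ : |∫ x, g x ∂(μ : Measure X) - ∫ x, h x ∂(μ : Measure X)| ≤ 2 * ‖g‖ * (1 - c) :=
    le_of_tendsto hlim.abs (hc.mono fun i hi ↦ hclose (ν i) hi)
  calc _ ≤ |∫ x, g (α x) ∂(μ : Measure X) - ∫ x, h x ∂(μ : Measure X)|
        + |∫ x, h x ∂(μ : Measure X) - ∫ x, g x ∂(μ : Measure X)| := abs_sub_le _ _ _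
    _ ≤ 2 * ‖g‖ * (1 - c) + 2 * ‖g‖ * (1 - c) := by
        gcongr
        · exact hclose μ (ProbabilityMeasure.le_measureReal_of_tendsto_of_isClosed hν hF hc)
        · rwa [abs_sub_comm]
    _ = 4 * ‖g‖ * (1 - c) := by ring

theorem integral_comp_eq_integral_of_tendsto (hν : Tendsto ν L (𝓝 μ)) (hα : Measurable α)
    (hF : ∀ c < 1, ∃ F, IsClosed F ∧ ContinuousOn α F ∧ ∀ᶠ i in L, c ≤ (ν i : Measure X).real F)
    (g : X →ᵇ ℝ)
    (hg : Tendsto (fun i ↦ ∫ x, g (α x) ∂(ν i : Measure X) - ∫ x, g x ∂(ν i : Measure X)) L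
      (𝓝 0)) :
    ∫ x, g (α x) ∂(μ : Measure X) = ∫ x, g x ∂(μ : Measure X) := by
  have hbound : Tendsto (fun c : ℝ ↦ 4 * ‖g‖ * (1 - c)) (𝓝[<] 1) (𝓝 0) := by
    refine tendsto_nhdsWithin_of_tendsto_nhds ?_
    simpa using (by fun_prop : Continuous fun c : ℝ ↦ 4 * ‖g‖ * (1 - c)).tendsto 1
  refine sub_eq_zero.1 (abs_nonpos_iff.1 (ge_of_tendsto hbound ?_))
  filter_upwards [self_mem_nhdsWithin] with c hc
  obtain ⟨F, hFc, hαF, hνF⟩ := hF c hc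
  exact abs_integral_comp_sub_integral_le_of_tendsto hν hα hFc hαF hνF g hg

theorem map_eq_self_of_tendsto [BorelSpace X] (hν : Tendsto ν L (𝓝 μ)) (hα : Measurable α)
    (hF : ∀ c < 1, ∃ F, IsClosed F ∧ ContinuousOn α F ∧ ∀ᶠ i in L, c ≤ (ν i : Measure X).real F)
    (hg : ∀ g : X →ᵇ ℝ, Tendsto
      (fun i ↦ ∫ x, g (α x) ∂(ν i : Measure X) - ∫ x, g x ∂(ν i : Measure X)) L (𝓝 0)) :
    (μ : Measure X).map α = μ := by
  refine ext_of_forall_integral_eq_of_IsFiniteMeasure fun g ↦ ?_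
  rw [integral_map hα.aemeasurable g.continuous.aestronglyMeasurable]
  exact integral_comp_eq_integral_of_tendsto hν hα hF g (hg g)

end

theorem stmt0_general {X : Type*} [MetricSpace X]
    [MeasurableSpace X] [BorelSpace X]
    (μseq : ℕ → Measure X) (hprob : ∀ n, IsProbabilityMeasure (μseq n))
    (α : X ≃ X) (hα : Measurable α)
    (hconv : ∀ g : C(X, ℝ),
      Tendsto (fun n => (∫ x, g (α x) ∂(μseq n)) - ∫ x, g x ∂(μseq n)) atTop (𝓝 0))
    (Xm : ℕ → Set X) (hclosed : ∀ m, IsClosed (Xm m))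
    (hcont : ∀ m, ContinuousOn (fun x => α x) (Xm m))
    (hmass : Tendsto (fun m => atTop.liminf (fun n => ((μseq n) (Xm m)).toReal))
      atTop (𝓝 1))
    (μ : Measure X) (hμprob : IsProbabilityMeasure μ)
    (φ : ℕ → ℕ) (hφ : StrictMono φ)
    (hlim : ∀ g : C(X, ℝ),
      Tendsto (fun n => ∫ x, g x ∂(μseq (φ n))) atTop (𝓝 (∫ x, g x ∂μ))) :
    Measure.map (fun x => α x) μ = μ := by
  let ν : ℕ → ProbabilityMeasure X := fun n ↦ ⟨μseq (φ n), hprob (φ n)⟩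
  have hν : Tendsto ν atTop (𝓝 ⟨μ, hμprob⟩) :=
    ProbabilityMeasure.tendsto_iff_forall_integral_tendsto.2 fun g ↦ hlim g.toContinuousMap
  refine map_eq_self_of_tendsto hν hα (fun c hc ↦ ?_)
    fun g ↦ (hconv g.toContinuousMap).comp hφ.tendsto_atTop
  obtain ⟨m, hm⟩ := (hmass.eventually (lt_mem_nhds hc)).exists
  have hXm : ∀ᶠ n in atTop, c < ((μseq n) (Xm m)).toReal :=
    eventually_lt_of_lt_liminf hm (isBoundedUnder_of ⟨0, fun _ ↦ ENNReal.toReal_nonneg⟩)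
  exact ⟨Xm m, hclosed m, hcont m, hφ.tendsto_atTop.eventually (hXm.mono fun _ ↦ le_of_lt)⟩

/-- **Lemma 3.4 of [Io09]**: if Borel probability measures `μ n` on a compact metric space
become almost invariant under a Borel automorphism `α` which is continuous on closed sets
`Xm m` of almost full asymptotic measure, then any weak* limit point of the sequence
is `α`-invariant. -/
theorem stmt0 {X : Type*} [MetricSpace X] [CompactSpace X]
    [MeasurableSpace X] [BorelSpace X]
    (μseq : ℕ → Measure X) (hprob : ∀ n, IsProbabilityMeasure (μseq n))
    (α : X ≃ X) (hα : Measurable α) (hαinv : Measurable α.symm)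
    (hconv : ∀ g : C(X, ℝ),
      Tendsto (fun n => (∫ x, g (α x) ∂(μseq n)) - ∫ x, g x ∂(μseq n)) atTop (𝓝 0))
    (Xm : ℕ → Set X) (hclosed : ∀ m, IsClosed (Xm m))
    (hcont : ∀ m, ContinuousOn (fun x => α x) (Xm m))
    (hmass : Tendsto (fun m => atTop.liminf (fun n => ((μseq n) (Xm m)).toReal))
      atTop (𝓝 1))
    (μ : Measure X) (hμprob : IsProbabilityMeasure μ)
    (φ : ℕ → ℕ) (hφ : StrictMono φ)
    (hlim : ∀ g : C(X, ℝ),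
      Tendsto (fun n => ∫ x, g x ∂(μseq (φ n))) atTop (𝓝 (∫ x, g x ∂μ))) :
    Measure.map (fun x => α x) μ = μ :=
  stmt0_general μseq hprob α hα hconv Xm hclosed hcont hmass μ hμprob φ hφ hlim
end

section
/- Let (X,μ) be a standard probability space and (ν_n) a sequence of Borel probability measures on X × X such that both coordinate projections push each ν_n forward to μ. Then the following are equivalent: (i) for all bounded Borel functions f₁, f₂ on X, ∫ f₁(x) f₂(y) dν_n(x,y) → ∫ f₁ f₂ dμ; (ii) for every Borel set A ⊆ X, ν_n(A × (X \ A)) → 0. -/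
open MeasureTheory Filter Topology

/-!
Put `D n := ∫ |f(x) - f(y)| dν_n`. If `ν_n (A × Aᶜ) → 0` for every Borel `A`, then `D n → 0` for
every bounded Borel `f`: on the set where `⌊f(x)/δ⌋ = ⌊f(y)/δ⌋` the integrand is at most `δ`, and
the complement is covered by the finitely many sets `Aₘ × Aₘᶜ` with `Aₘ = {⌊f/δ⌋ = m}`.
Since the first marginal of `ν_n` is `μ`, the difference
`∫ f₁(x) f₂(y) dν_n - ∫ f₁ f₂ dμ = ∫ f₁(x) (f₂(y) - f₂(x)) dν_n` is at most `C₁ D n` for `f = f₂`.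
Conversely, `f₁ = 1_A`, `f₂ = 1_{Aᶜ}` turns (i) into (ii).
-/

lemma abs_sub_le_of_floor_div_eq {δ a b : ℝ} (hδ : 0 < δ) (h : ⌊a / δ⌋ = ⌊b / δ⌋) :
    |a - b| ≤ δ := by
  have := Int.abs_sub_lt_one_of_floor_eq_floor h
  rw [← sub_div, abs_div, abs_of_pos hδ, div_lt_one hδ] at this
  exact this.le

lemma floor_div_mem_Icc {δ a C : ℝ} (hδ : 0 < δ) (ha : |a| ≤ C) :
    ⌊a / δ⌋ ∈ Finset.Icc ⌊-C / δ⌋ ⌊C / δ⌋ := by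
  obtain ⟨hl, hu⟩ := abs_le.mp ha
  exact Finset.mem_Icc.mpr ⟨Int.floor_mono (by gcongr), Int.floor_mono (by gcongr)⟩

lemma integrable_of_abs_le {α : Type*} [MeasurableSpace α] {ν : Measure α} [IsFiniteMeasure ν]
    {f : α → ℝ} (hf : Measurable f) {C : ℝ} (hC : ∀ x, |f x| ≤ C) : Integrable f ν :=
  .of_bound hf.aestronglyMeasurable C (ae_of_all _ hC)

lemma abs_sub_le_of_abs_le {α : Type*} {f : α → ℝ} {C : ℝ} (hC : ∀ x, |f x| ≤ C) (x y : α) :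
    |f x - f y| ≤ 2 * C := by
  linarith [abs_sub (f x) (f y), hC x, hC y]

section

variable {X : Type*} [MeasurableSpace X]

lemma measureReal_setOf_ne_le_sum {β : Type*} (ν : Measure (X × X)) [IsFiniteMeasure ν]
    (g : X → β) (I : Finset β) (hI : ∀ x, g x ∈ I) :
    ν.real {p | g p.1 ≠ g p.2} ≤ ∑ b ∈ I, ν.real ((g ⁻¹' {b}) ×ˢ (g ⁻¹' {b})ᶜ) := by
  refine (measureReal_mono (fun p hp => ?_) (measure_ne_top _ _)).trans
    (measureReal_biUnion_finset_le I _)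
  exact Set.mem_biUnion (hI p.1) ⟨rfl, fun h => hp h.symm⟩

lemma integral_abs_sub_le {ν : Measure (X × X)} [IsProbabilityMeasure ν] {f : X → ℝ}
    (hf : Measurable f) {C : ℝ} (hC : ∀ x, |f x| ≤ C) {δ : ℝ} (hδ : 0 < δ) :
    ∫ p, |f p.1 - f p.2| ∂ν ≤ δ + ν.real {p | ⌊f p.1 / δ⌋ ≠ ⌊f p.2 / δ⌋} * (2 * C) := by
  set S := {p : X × X | ⌊f p.1 / δ⌋ ≠ ⌊f p.2 / δ⌋}
  have hg : Measurable fun x => ⌊f x / δ⌋ := (hf.div_const δ).floor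
  have hS : MeasurableSet S :=
    (measurableSet_eq_fun (hg.comp measurable_fst) (hg.comp measurable_snd)).compl
  have hpt : ∀ p : X × X, |f p.1 - f p.2| ≤ δ + S.indicator (fun _ => 2 * C) p := by
    intro p
    by_cases hp : p ∈ S
    · rw [Set.indicator_of_mem hp]
      linarith [abs_sub_le_of_abs_le hC p.1 p.2]
    · rw [Set.indicator_of_notMem hp, add_zero]
      exact abs_sub_le_of_floor_div_eq hδ (not_not.mp hp)
  have hint : Integrable (fun p : X × X => |f p.1 - f p.2|) ν :=
    integrable_of_abs_le ((hf.comp measurable_fst).sub (hf.comp measurable_snd)).abs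
      fun p => (abs_abs _).trans_le (abs_sub_le_of_abs_le hC p.1 p.2)
  calc ∫ p, |f p.1 - f p.2| ∂ν
      ≤ ∫ p, (δ + S.indicator (fun _ => 2 * C) p) ∂ν :=
        integral_mono hint ((integrable_const δ).add ((integrable_const _).indicator hS)) hpt
    _ = δ + ν.real S * (2 * C) := by
        rw [integral_add (integrable_const δ) ((integrable_const _).indicator hS),
          integral_const, integral_indicator_const _ hS]
        simp

variable {ν : ℕ → Measure (X × X)} [∀ n, IsProbabilityMeasure (ν n)]

lemma tendsto_measureReal_setOf_ne
    (hA : ∀ A : Set X, MeasurableSet A → Tendsto (fun n => (ν n).real (A ×ˢ Aᶜ)) atTop (𝓝 0))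
    {β : Type*} [MeasurableSpace β] [MeasurableSingletonClass β] {g : X → β} (hg : Measurable g)
    (I : Finset β) (hI : ∀ x, g x ∈ I) :
    Tendsto (fun n => (ν n).real {p | g p.1 ≠ g p.2}) atTop (𝓝 0) := by
  refine squeeze_zero (fun _ => measureReal_nonneg)
    (fun n => measureReal_setOf_ne_le_sum (ν n) g I hI) ?_
  simpa using tendsto_finsetSum I fun b _ => hA _ (hg (measurableSet_singleton b))

lemma tendsto_integral_abs_sub
    (hA : ∀ A : Set X, MeasurableSet A → Tendsto (fun n => (ν n).real (A ×ˢ Aᶜ)) atTop (𝓝 0))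
    {f : X → ℝ} (hf : Measurable f) {C : ℝ} (hC : ∀ x, |f x| ≤ C) :
    Tendsto (fun n => ∫ p, |f p.1 - f p.2| ∂(ν n)) atTop (𝓝 0) := by
  refine tendsto_order.2 ⟨fun a ha => .of_forall fun n =>
    ha.trans_le (integral_nonneg fun _ => abs_nonneg _), fun ε hε => ?_⟩
  have hδ : 0 < ε / 2 := half_pos hε
  have hbad := tendsto_measureReal_setOf_ne hA (hf.div_const (ε / 2)).floor _
    fun x => floor_div_mem_Icc hδ (hC x)
  have hbound : Tendsto (fun n => ε / 2 + (ν n).real {p | ⌊f p.1 / (ε / 2)⌋ ≠ ⌊f p.2 / (ε / 2)⌋}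
      * (2 * C)) atTop (𝓝 (ε / 2)) := by
    simpa using tendsto_const_nhds.add (hbad.mul_const (2 * C))
  filter_upwards [hbound.eventually_lt_const (half_lt_self hε)] with n hn
  exact (integral_abs_sub_le hf hC hδ).trans_lt hn

lemma tendsto_integral_mul_of_tendsto_measureReal_prod_compl {μ : Measure X}
    (h1 : ∀ n, Measure.map Prod.fst (ν n) = μ)
    (hA : ∀ A : Set X, MeasurableSet A → Tendsto (fun n => (ν n).real (A ×ˢ Aᶜ)) atTop (𝓝 0))
    {f₁ f₂ : X → ℝ} (hf₁ : Measurable f₁) (hf₂ : Measurable f₂) {C₁ C₂ : ℝ}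
    (hC₁ : ∀ x, |f₁ x| ≤ C₁) (hC₂ : ∀ x, |f₂ x| ≤ C₂) :
    Tendsto (fun n => ∫ p, f₁ p.1 * f₂ p.2 ∂(ν n)) atTop (𝓝 (∫ x, f₁ x * f₂ x ∂μ)) := by
  have hdiff : ∀ n, ∫ p, f₁ p.1 * f₂ p.2 ∂(ν n) - ∫ x, f₁ x * f₂ x ∂μ
      = ∫ p, f₁ p.1 * (f₂ p.2 - f₂ p.1) ∂(ν n) := by
    intro n
    have hC₁₂ : ∀ x y, |f₁ x * f₂ y| ≤ C₁ * C₂ := fun x y => by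
      rw [abs_mul]
      exact mul_le_mul (hC₁ x) (hC₂ y) (abs_nonneg _) ((abs_nonneg _).trans (hC₁ x))
    rw [← h1 n, integral_map (f := fun x => f₁ x * f₂ x) measurable_fst.aemeasurable
      (hf₁.mul hf₂).aestronglyMeasurable, ← integral_sub]
    · simp only [mul_sub]
    · exact integrable_of_abs_le ((hf₁.comp measurable_fst).mul (hf₂.comp measurable_snd))
        fun p => hC₁₂ p.1 p.2
    · exact integrable_of_abs_le ((hf₁.comp measurable_fst).mul (hf₂.comp measurable_fst))
        fun p => hC₁₂ p.1 p.1
  have hbound : ∀ n, ‖∫ p, f₁ p.1 * (f₂ p.2 - f₂ p.1) ∂(ν n)‖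
      ≤ C₁ * ∫ p, |f₂ p.1 - f₂ p.2| ∂(ν n) := by
    intro n
    rw [← integral_const_mul]
    refine norm_integral_le_of_norm_le ((integrable_of_abs_le
      ((hf₂.comp measurable_fst).sub (hf₂.comp measurable_snd)).abs
      fun p => (abs_abs _).trans_le (abs_sub_le_of_abs_le hC₂ p.1 p.2)).const_mul C₁)
      (ae_of_all _ fun p => ?_)
    rw [Real.norm_eq_abs, abs_mul, abs_sub_comm]
    exact mul_le_mul_of_nonneg_right (hC₁ p.1) (abs_nonneg _)
  rw [tendsto_iff_norm_sub_tendsto_zero]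
  simp only [hdiff]
  exact squeeze_zero (fun _ => norm_nonneg _) hbound
    (by simpa using (tendsto_integral_abs_sub hA hf₂ hC₂).const_mul C₁)

end

lemma integral_indicator_mul_indicator_compl {X : Type*} [MeasurableSpace X]
    (ν : Measure (X × X)) {A : Set X} (hA : MeasurableSet A) :
    ∫ p, A.indicator (1 : X → ℝ) p.1 * Aᶜ.indicator 1 p.2 ∂ν = ν.real (A ×ˢ Aᶜ) := by
  simp only [← Set.indicator_prod_one]
  exact integral_indicator_one (hA.prod hA.compl)

lemma abs_indicator_one_le {X : Type*} (A : Set X) (x : X) : |A.indicator (1 : X → ℝ) x| ≤ 1 := by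
  by_cases hx : x ∈ A <;> simp [hx]

theorem stmt2_general {X : Type*} [MeasurableSpace X]
    (μ : Measure X)
    (ν : ℕ → Measure (X × X)) (hprob : ∀ n, IsProbabilityMeasure (ν n))
    (h1 : ∀ n, Measure.map Prod.fst (ν n) = μ) :
    (∀ f₁ f₂ : X → ℝ, Measurable f₁ → Measurable f₂ →
        (∃ C, ∀ x, |f₁ x| ≤ C) → (∃ C, ∀ x, |f₂ x| ≤ C) →
        Tendsto (fun n => ∫ p, f₁ p.1 * f₂ p.2 ∂(ν n)) atTop (𝓝 (∫ x, f₁ x * f₂ x ∂μ)))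
      ↔ (∀ A : Set X, MeasurableSet A →
        Tendsto (fun n => ((ν n) (A ×ˢ Aᶜ)).toReal) atTop (𝓝 0)) := by
  constructor
  · intro h A hA
    have hdisj : ∀ x, A.indicator (1 : X → ℝ) x * Aᶜ.indicator 1 x = 0 := fun x => by
      by_cases hx : x ∈ A <;> simp [hx]
    have := h _ _ (measurable_one.indicator hA) (measurable_one.indicator hA.compl)
      ⟨1, abs_indicator_one_le A⟩ ⟨1, abs_indicator_one_le Aᶜ⟩
    simpa only [hdisj, integral_zero, integral_indicator_mul_indicator_compl _ hA,
      Measure.real_def] using this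
  · rintro hA f₁ f₂ hf₁ hf₂ ⟨C₁, hC₁⟩ ⟨C₂, hC₂⟩
    exact tendsto_integral_mul_of_tendsto_measureReal_prod_compl h1 hA hf₁ hf₂ hC₁ hC₂

/-- **Remark 2.3 (a), equivalence of (i) and (ii)'':** for probability measures `ν n` on
`X × X` with both marginals equal to `μ`, the correlation condition
`∫ f₁(x) f₂(y) dν_n → ∫ f₁ f₂ dμ` (for all bounded Borel `f₁, f₂`) is equivalent to
`ν_n (A × Aᶜ) → 0` for every Borel set `A`. -/
theorem stmt2 {X : Type*} [MeasurableSpace X] [StandardBorelSpace X]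
    (μ : Measure X) [IsProbabilityMeasure μ]
    (ν : ℕ → Measure (X × X)) (hprob : ∀ n, IsProbabilityMeasure (ν n))
    (h1 : ∀ n, Measure.map Prod.fst (ν n) = μ)
    (h2 : ∀ n, Measure.map Prod.snd (ν n) = μ) :
    (∀ f₁ f₂ : X → ℝ, Measurable f₁ → Measurable f₂ →
        (∃ C, ∀ x, |f₁ x| ≤ C) → (∃ C, ∀ x, |f₂ x| ≤ C) →
        Tendsto (fun n => ∫ p, f₁ p.1 * f₂ p.2 ∂(ν n)) atTop (𝓝 (∫ x, f₁ x * f₂ x ∂μ)))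
      ↔ (∀ A : Set X, MeasurableSet A →
        Tendsto (fun n => ((ν n) (A ×ˢ Aᶜ)).toReal) atTop (𝓝 0)) :=
  stmt2_general μ ν hprob h1
end

section
/- Let X be a Polish space with a Borel probability measure μ, and let (ν_n) be Borel probability measures on X × X with both marginals equal to μ, such that ∫ f₁(x) f₂(y) dν_n(x,y) → ∫ f₁ f₂ dμ for all bounded Borel functions f₁, f₂ on X. Let μ̃ be the pushforward of μ under the diagonal map x ↦ (x,x). Then ν_n converges to μ̃ in the weak* topology, i.e. ∫ f dν_n → ∫ f dμ̃ for every bounded continuous function f on X × X. -/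
/-!
Testing the correlation hypothesis on `f₁ = f₂ = 1_s` shows that `ν n` asymptotically puts no
mass on pairs `(x, y)` with `x ∈ s`, `y ∉ s`. Covering a compact set that carries all but `ε` of
`μ` by finitely many balls of radius `δ / 2` then gives `ν n {δ ≤ d(x, y)} → 0`: the couplings
concentrate on the diagonal. For a bounded `L`-Lipschitz `F` this yields
`|∫ F dν n - ∫ F(x, x) dμ| ≤ L δ + 2 ‖F‖ ν n {δ ≤ d(x, y)}`, since the first marginal is `μ`;
by the portmanteau theorem bounded Lipschitz test functions suffice for weak convergence.
-/

open MeasureTheory Filter Topology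

open scoped NNReal
open Metric Set BoundedContinuousFunction

section

variable {ι : Type*} {l : Filter ι}

lemma tendsto_of_forall_dist_le_add_of_tendsto_zero {u : ι → ℝ} {a : ℝ}
    (h : ∀ ε > 0, ∃ v : ι → ℝ, Tendsto v l (𝓝 0) ∧ ∀ i, dist (u i) a ≤ ε + v i) :
    Tendsto u l (𝓝 a) := by
  refine Metric.tendsto_nhds.2 fun ε hε => ?_
  obtain ⟨v, hv, huv⟩ := h (ε / 2) (half_pos hε)
  filter_upwards [hv.eventually (gt_mem_nhds (half_pos hε))] with i hi
  linarith [huv i]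

section Coupling

variable {X : Type*} [MeasurableSpace X]

lemma integral_indicator_one_mul_indicator_one (ν : Measure (X × X)) {s t : Set X}
    (hs : MeasurableSet s) (ht : MeasurableSet t) :
    ∫ p, s.indicator (1 : X → ℝ) p.1 * t.indicator 1 p.2 ∂ν = ν.real (s ×ˢ t) := by
  simp_rw [← indicator_prod_one]
  exact integral_indicator_one (hs.prod ht)

lemma measureReal_fst_preimage_sdiff_snd_preimage {μ : Measure X} {ν : Measure (X × X)}
    [IsFiniteMeasure ν] (hν : ν.map Prod.fst = μ) {s : Set X} (hs : MeasurableSet s) :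
    ν.real (Prod.fst ⁻¹' s \ Prod.snd ⁻¹' s) = μ.real s - ν.real (s ×ˢ s) := by
  rw [← hν, map_measureReal_apply measurable_fst hs, ← measureReal_sdiff
    (s₁ := Prod.fst ⁻¹' s) (fun p hp => hp.1) (hs.prod hs)]
  congr 1
  ext p
  simp only [Set.mem_sdiff, mem_preimage, mem_prod]
  tauto

lemma tendsto_measureReal_fst_preimage_sdiff_snd_preimage {μ : Measure X}
    {ν : ι → Measure (X × X)} [∀ i, IsFiniteMeasure (ν i)] (hν : ∀ i, (ν i).map Prod.fst = μ)
    {s : Set X} (hs : MeasurableSet s)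
    (hcorr : Tendsto (fun i => ∫ p, s.indicator (1 : X → ℝ) p.1 * s.indicator 1 p.2 ∂ν i) l
      (𝓝 (∫ x, s.indicator (1 : X → ℝ) x * s.indicator 1 x ∂μ))) :
    Tendsto (fun i => (ν i).real (Prod.fst ⁻¹' s \ Prod.snd ⁻¹' s)) l (𝓝 0) := by
  have hdiag : ∫ x, s.indicator (1 : X → ℝ) x * s.indicator 1 x ∂μ = μ.real s := by
    rw [← integral_indicator_one hs]
    congr 1 with x
    by_cases hx : x ∈ s <;> simp [hx]
  simp_rw [integral_indicator_one_mul_indicator_one _ hs hs, hdiag] at hcorr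
  simpa [measureReal_fst_preimage_sdiff_snd_preimage (hν _) hs] using
    (tendsto_const_nhds (x := μ.real s)).sub hcorr

end Coupling

section Metric

variable {X : Type*} [MetricSpace X]

lemma setOf_le_dist_subset {K : Set X} {t : Finset X} {δ : ℝ}
    (hK : K ⊆ ⋃ y ∈ t, ball y (δ / 2)) :
    {p : X × X | δ ≤ dist p.1 p.2} ⊆
      Prod.fst ⁻¹' Kᶜ ∪ ⋃ y ∈ t, (Prod.fst ⁻¹' ball y (δ / 2) \ Prod.snd ⁻¹' ball y (δ / 2)) := by
  rintro ⟨x, x'⟩ (hxx' : δ ≤ dist x x')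
  by_cases hx : x ∈ K
  · obtain ⟨y, hy, hxy⟩ := mem_iUnion₂.1 (hK hx)
    refine Or.inr (mem_iUnion₂.2 ⟨y, hy, hxy, fun hx'y => ?_⟩)
    linarith [dist_triangle_right x x' y, mem_ball.1 hxy, mem_ball.1 hx'y]
  · exact Or.inl hx

variable [MeasurableSpace X] [OpensMeasurableSpace X]

lemma tendsto_measureReal_le_dist {μ : Measure X} {ν : ι → Measure (X × X)}
    [∀ i, IsFiniteMeasure (ν i)] (hμ : ∀ ε > 0, ∃ K, IsCompact K ∧ μ.real Kᶜ < ε)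
    (hν : ∀ i, (ν i).map Prod.fst = μ)
    (hsep : ∀ s, IsOpen s → Tendsto (fun i => (ν i).real (Prod.fst ⁻¹' s \ Prod.snd ⁻¹' s)) l (𝓝 0))
    {δ : ℝ} (hδ : 0 < δ) :
    Tendsto (fun i => (ν i).real {p : X × X | δ ≤ dist p.1 p.2}) l (𝓝 0) := by
  refine tendsto_of_forall_dist_le_add_of_tendsto_zero fun ε hε => ?_
  obtain ⟨K, hK, hKμ⟩ := hμ ε hε
  obtain ⟨t, -, htK⟩ := hK.elim_nhds_subcover (fun y => ball y (δ / 2))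
    fun y _ => ball_mem_nhds y (half_pos hδ)
  set B : X → Set (X × X) := fun y => Prod.fst ⁻¹' ball y (δ / 2) \ Prod.snd ⁻¹' ball y (δ / 2)
  refine ⟨fun i => ∑ y ∈ t, (ν i).real (B y), ?_, fun i => ?_⟩
  · simpa using tendsto_finsetSum t fun y _ => hsep _ isOpen_ball
  have hKc : (ν i).real (Prod.fst ⁻¹' Kᶜ) = μ.real Kᶜ := by
    rw [← hν i, map_measureReal_apply measurable_fst hK.isClosed.measurableSet.compl]
  rw [Real.dist_0_eq_abs, abs_of_nonneg measureReal_nonneg]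
  calc (ν i).real {p : X × X | δ ≤ dist p.1 p.2}
      ≤ (ν i).real (Prod.fst ⁻¹' Kᶜ ∪ ⋃ y ∈ t, B y) := measureReal_mono (setOf_le_dist_subset htK)
    _ ≤ (ν i).real (Prod.fst ⁻¹' Kᶜ) + ∑ y ∈ t, (ν i).real (B y) :=
      (measureReal_union_le _ _).trans (by gcongr; exact measureReal_biUnion_finset_le _ _)
    _ ≤ ε + ∑ y ∈ t, (ν i).real (B y) := by rw [hKc]; gcongr

variable [SecondCountableTopology X]

lemma abs_integral_sub_integral_diag_le (ν : Measure (X × X)) [IsProbabilityMeasure ν]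
    (F : X × X →ᵇ ℝ) {L : ℝ≥0} (hF : LipschitzWith L F) {δ : ℝ} (hδ : 0 ≤ δ) :
    |∫ p, F p ∂ν - ∫ p, F (p.1, p.1) ∂ν| ≤
      L * δ + 2 * ‖F‖ * ν.real {p : X × X | δ ≤ dist p.1 p.2} := by
  set S := {p : X × X | δ ≤ dist p.1 p.2}
  have hS : MeasurableSet S :=
    measurableSet_le measurable_const (measurable_fst.dist measurable_snd)
  have hpt : ∀ p : X × X, |F p - F (p.1, p.1)| ≤ L * δ + 2 * ‖F‖ * S.indicator 1 p := by
    intro p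
    by_cases hp : p ∈ S
    · rw [indicator_of_mem hp, Pi.one_apply, mul_one, ← Real.dist_eq]
      exact (F.dist_le_two_norm _ _).trans (le_add_of_nonneg_left (by positivity))
    · rw [indicator_of_notMem hp, mul_zero, add_zero, ← Real.dist_eq]
      have hpδ : dist p (p.1, p.1) ≤ δ := by
        rw [Prod.dist_eq, dist_self, dist_comm]
        exact max_le hδ (not_le.1 hp).le
      exact (hF.dist_le_mul _ _).trans (by gcongr)
  have hF₂ : Integrable (fun p : X × X => F (p.1, p.1)) ν :=
    (F.compContinuous ⟨fun p : X × X => (p.1, p.1), by fun_prop⟩).integrable ν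
  have hS₁ : Integrable (S.indicator (1 : X × X → ℝ)) ν := (integrable_const 1).indicator hS
  rw [← integral_sub (F.integrable ν) hF₂]
  calc |∫ p, (F p - F (p.1, p.1)) ∂ν|
      ≤ ∫ p, |F p - F (p.1, p.1)| ∂ν := abs_integral_le_integral_abs
    _ ≤ ∫ p, (L * δ + 2 * ‖F‖ * S.indicator 1 p) ∂ν :=
      integral_mono ((F.integrable ν).sub hF₂).abs ((integrable_const _).add (hS₁.const_mul _)) hpt
    _ = L * δ + 2 * ‖F‖ * ν.real S := by
      rw [integral_add (integrable_const _) (hS₁.const_mul _), integral_const, integral_const_mul,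
        integral_indicator_one hS]
      simp

lemma tendsto_integral_of_tendsto_measureReal_le_dist {μ : Measure X} {ν : ι → Measure (X × X)}
    [∀ i, IsProbabilityMeasure (ν i)] (hν : ∀ i, (ν i).map Prod.fst = μ)
    (hdist : ∀ δ > 0, Tendsto (fun i => (ν i).real {p : X × X | δ ≤ dist p.1 p.2}) l (𝓝 0))
    (F : X × X →ᵇ ℝ) {L : ℝ≥0} (hF : LipschitzWith L F) :
    Tendsto (fun i => ∫ p, F p ∂ν i) l (𝓝 (∫ x, F (x, x) ∂μ)) := by
  have hdiag : ∀ i, ∫ p, F (p.1, p.1) ∂ν i = ∫ x, F (x, x) ∂μ := fun i => by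
    rw [← hν i, integral_map measurable_fst.aemeasurable (by fun_prop)]
  refine tendsto_of_forall_dist_le_add_of_tendsto_zero fun ε hε => ?_
  have hδ : 0 < ε / (L + 1) := by positivity
  refine ⟨fun i => 2 * ‖F‖ * (ν i).real {p : X × X | ε / (L + 1) ≤ dist p.1 p.2},
    by simpa using (hdist _ hδ).const_mul (2 * ‖F‖), fun i => ?_⟩
  rw [Real.dist_eq, ← hdiag i]
  refine (abs_integral_sub_integral_diag_le _ F hF hδ.le).trans (add_le_add_left ?_ _)
  rw [mul_div_assoc']
  exact div_le_of_le_mul₀ (by positivity) hε.le (by nlinarith)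

end Metric

end

lemma exists_isCompact_measureReal_compl_lt {X : Type*} [TopologicalSpace X] [T2Space X]
    [MeasurableSpace X] [OpensMeasurableSpace X] (μ : Measure X) [IsFiniteMeasure μ]
    [μ.InnerRegularCompactLTTop] {ε : ℝ} (hε : 0 < ε) : ∃ K, IsCompact K ∧ μ.real Kᶜ < ε := by
  obtain ⟨K, -, hK, hKμ⟩ := MeasurableSet.univ.exists_isCompact_sdiff_lt (measure_ne_top μ univ)
    (ENNReal.ofReal_pos.2 hε).ne'
  rw [← compl_eq_univ_sdiff] at hKμ
  exact ⟨K, hK, ENNReal.toReal_lt_of_lt_ofReal hKμ⟩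

theorem stmt4_general {X : Type*} [TopologicalSpace X] [PolishSpace X]
    [MeasurableSpace X] [BorelSpace X]
    (μ : Measure X) [IsProbabilityMeasure μ]
    (ν : ℕ → Measure (X × X)) (hprob : ∀ n, IsProbabilityMeasure (ν n))
    (h1 : ∀ n, Measure.map Prod.fst (ν n) = μ)
    (hcorr : ∀ f₁ f₂ : X → ℝ, Measurable f₁ → Measurable f₂ →
      (∃ C, ∀ x, |f₁ x| ≤ C) → (∃ C, ∀ x, |f₂ x| ≤ C) →
      Tendsto (fun n => ∫ p, f₁ p.1 * f₂ p.2 ∂(ν n)) atTop (𝓝 (∫ x, f₁ x * f₂ x ∂μ))) :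
    ∀ f : BoundedContinuousFunction (X × X) ℝ,
      Tendsto (fun n => ∫ p, f p ∂(ν n)) atTop
        (𝓝 (∫ p, f p ∂(Measure.map (fun x => (x, x)) μ))) := by
  let := TopologicalSpace.upgradeIsCompletelyMetrizable X
  have hsep : ∀ s : Set X, IsOpen s →
      Tendsto (fun n => (ν n).real (Prod.fst ⁻¹' s \ Prod.snd ⁻¹' s)) atTop (𝓝 0) := by
    intro s hs
    have hmeas : Measurable (s.indicator (1 : X → ℝ)) := measurable_one.indicator hs.measurableSet
    have hbdd : ∃ C, ∀ x, |s.indicator (1 : X → ℝ) x| ≤ C :=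
      ⟨1, fun x => by by_cases hx : x ∈ s <;> simp [hx]⟩
    exact tendsto_measureReal_fst_preimage_sdiff_snd_preimage h1 hs.measurableSet
      (hcorr _ _ hmeas hmeas hbdd hbdd)
  have hdist : ∀ δ > 0, Tendsto (fun n => (ν n).real {p : X × X | δ ≤ dist p.1 p.2}) atTop (𝓝 0) :=
    fun δ hδ => tendsto_measureReal_le_dist
      (fun ε hε => exists_isCompact_measureReal_compl_lt μ hε) h1 hsep hδ
  let P : ℕ → ProbabilityMeasure (X × X) := fun n => ⟨ν n, hprob n⟩
  let Q : ProbabilityMeasure (X × X) :=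
    ⟨μ.map fun x => (x, x), Measure.isProbabilityMeasure_map (by fun_prop)⟩
  have hPQ : Tendsto P atTop (𝓝 Q) := by
    refine tendsto_iff_forall_lipschitz_integral_tendsto.2 fun f ⟨C, hC⟩ ⟨L, hf⟩ => ?_
    have := hprob
    simp only [P, Q, ProbabilityMeasure.coe_mk]
    rw [integral_map (by fun_prop) hf.continuous.aestronglyMeasurable]
    exact tendsto_integral_of_tendsto_measureReal_le_dist h1 hdist
      (mkOfBound ⟨f, hf.continuous⟩ C hC) hf
  exact ProbabilityMeasure.tendsto_iff_forall_integral_tendsto.1 hPQ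

/-- **Remark 2.3 (b):** if probability measures `ν n` on `X × X` (X Polish) have both
marginals equal to `μ` and satisfy the correlation condition
`∫ f₁(x) f₂(y) dν_n → ∫ f₁ f₂ dμ` for all bounded Borel `f₁, f₂`, then `ν n` converges
weak* to the pushforward `μ̃` of `μ` under the diagonal map `x ↦ (x, x)`. -/
theorem stmt4 {X : Type*} [TopologicalSpace X] [PolishSpace X]
    [MeasurableSpace X] [BorelSpace X]
    (μ : Measure X) [IsProbabilityMeasure μ]
    (ν : ℕ → Measure (X × X)) (hprob : ∀ n, IsProbabilityMeasure (ν n))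
    (h1 : ∀ n, Measure.map Prod.fst (ν n) = μ)
    (h2 : ∀ n, Measure.map Prod.snd (ν n) = μ)
    (hcorr : ∀ f₁ f₂ : X → ℝ, Measurable f₁ → Measurable f₂ →
      (∃ C, ∀ x, |f₁ x| ≤ C) → (∃ C, ∀ x, |f₂ x| ≤ C) →
      Tendsto (fun n => ∫ p, f₁ p.1 * f₂ p.2 ∂(ν n)) atTop (𝓝 (∫ x, f₁ x * f₂ x ∂μ))) :
    ∀ f : BoundedContinuousFunction (X × X) ℝ,
      Tendsto (fun n => ∫ p, f p ∂(ν n)) atTop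
        (𝓝 (∫ p, f p ∂(Measure.map (fun x => (x, x)) μ))) :=
  stmt4_general μ ν hprob h1 hcorr
end

section
/- Let Γ ↷ (X,μ) be a free, ergodic, measure-preserving action of a countable group, with induced orbit equivalence relation S, and let R ⊆ S be an ergodic subequivalence relation. Suppose ν_n are Borel probability measures on X × X, with both marginals μ, satisfying ∫ f₁(x)f₂(y) dν_n → ∫ f₁f₂ dμ for all bounded Borel f₁,f₂, and ‖(θ×θ)_*ν_n − ν_n‖ → 0 for every θ ∈ [R]. Let w : [R] × X → Γ be the cocycle with θ(x) = w(θ,x)·x, A_γ = {x : w(θ,x) = γ} for a fixed θ ∈ [R], and θ̃(x,y) = (θ(x), w(θ,x)·y). Then liminf_n ν_n(⋃_γ A_γ × A_γ) = 1, and consequently ∫ (f∘θ̃) dν_n − ∫ f dν_n → 0 for every bounded Borel function f on X × X. -/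
/-!
Testing the correlation condition against indicators gives `ν n (A γ ×ˢ A γ) → μ (A γ)`, and
since the level sets `A γ = {w = γ}` partition `X`, these limits sum to `1`: the measures `ν n`
concentrate on `D = ⋃ γ, A γ ×ˢ A γ`. On `D` the twist `θ̃ (x, y) = (θ x, w x • y)` coincides with
`θ × θ`, so for `|f| ≤ C` the difference `∫ f ∘ θ̃ dν n - ∫ f dν n` is at most `2 C ν n Dᶜ` plus
`C` times the total variation distance between `(θ × θ)_* ν n` and `ν n`; both tend to `0`.
-/

open MeasureTheory Filter Topology

/-- The total variation norm `‖μ - ν‖`. -/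
noncomputable def tvDist {X : Type*} [MeasurableSpace X] (μ ν : Measure X) : ℝ :=
  ⨆ f : {f : X → ℝ // Measurable f ∧ ∀ x, |f x| ≤ 1},
    |(∫ x, f.1 x ∂μ) - ∫ x, f.1 x ∂ν|

section TotalVariation

variable {α : Type*} [MeasurableSpace α] {μ ν : Measure α} [IsFiniteMeasure μ] [IsFiniteMeasure ν]

lemma abs_integral_sub_integral_le_tvDist {g : α → ℝ} (hg : Measurable g)
    (hg1 : ∀ x, |g x| ≤ 1) :
    |∫ x, g x ∂μ - ∫ x, g x ∂ν| ≤ tvDist μ ν := by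
  refine le_ciSup (f := fun f : {f : α → ℝ // Measurable f ∧ ∀ x, |f x| ≤ 1} =>
    |∫ x, f.1 x ∂μ - ∫ x, f.1 x ∂ν|) ⟨μ.real Set.univ + ν.real Set.univ, ?_⟩ ⟨g, hg, hg1⟩
  rintro _ ⟨⟨f, -, hf1⟩, rfl⟩
  have hbound (m : Measure α) [IsFiniteMeasure m] : |∫ x, f x ∂m| ≤ m.real Set.univ := by
    simpa using norm_integral_le_of_norm_le_const (μ := m) (f := f) (C := 1)
      (.of_forall fun x => by simpa using hf1 x)
  exact (abs_sub _ _).trans (add_le_add (hbound μ) (hbound ν))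

lemma abs_integral_sub_integral_le_mul_tvDist {f : α → ℝ} (hf : Measurable f) {C : ℝ}
    (hC : 0 < C) (hfC : ∀ x, |f x| ≤ C) :
    |∫ x, f x ∂μ - ∫ x, f x ∂ν| ≤ C * tvDist μ ν := by
  have h := abs_integral_sub_integral_le_tvDist (μ := μ) (ν := ν) (hf.div_const C) fun x => by
    rw [abs_div, abs_of_pos hC, div_le_one hC]
    exact hfC x
  rwa [integral_div, integral_div, ← sub_div, abs_div, abs_of_pos hC, div_le_iff₀' hC] at h

lemma abs_integral_sub_integral_le_of_eqOn {f g : α → ℝ} (hf : Measurable f) (hg : Measurable g)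
    {C : ℝ} (hfC : ∀ x, |f x| ≤ C) (hgC : ∀ x, |g x| ≤ C) {D : Set α} (hfg : Set.EqOn f g D) :
    |∫ x, f x ∂ν - ∫ x, g x ∂ν| ≤ 2 * C * ν.real Dᶜ := by
  have hint {h : α → ℝ} (hm : Measurable h) (hC : ∀ x, |h x| ≤ C) : Integrable h ν :=
    .of_bound hm.aestronglyMeasurable C (.of_forall fun x => by simpa using hC x)
  rw [← integral_sub (hint hf hfC) (hint hg hgC),
    ← setIntegral_eq_integral_of_forall_compl_eq_zero (s := Dᶜ)
      fun x hx => sub_eq_zero.2 (hfg (not_not.1 hx))]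
  have hbound : ∀ x ∈ Dᶜ, ‖f x - g x‖ ≤ 2 * C := fun x _ => by
    rw [Real.norm_eq_abs]
    linarith [abs_sub (f x) (g x), hfC x, hgC x]
  simpa [mul_comm] using norm_setIntegral_le_of_norm_le_const (measure_lt_top ν _) hbound

lemma abs_integral_comp_sub_integral_le {φ ψ : α → α} (hφ : Measurable φ) (hψ : Measurable ψ)
    {D : Set α} (hφψ : Set.EqOn φ ψ D) {f : α → ℝ} (hf : Measurable f) {C : ℝ} (hC : 0 < C)
    (hfC : ∀ x, |f x| ≤ C) :
    |∫ x, f (φ x) ∂ν - ∫ x, f x ∂ν| ≤ 2 * C * ν.real Dᶜ + C * tvDist (ν.map ψ) ν := by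
  have hφψ' : |∫ x, f (φ x) ∂ν - ∫ x, f (ψ x) ∂ν| ≤ 2 * C * ν.real Dᶜ :=
    abs_integral_sub_integral_le_of_eqOn (hf.comp hφ) (hf.comp hψ) (fun x => hfC _)
      (fun x => hfC _) fun x hx => congrArg f (hφψ hx)
  have hψ' : |∫ x, f (ψ x) ∂ν - ∫ x, f x ∂ν| ≤ C * tvDist (ν.map ψ) ν := by
    rw [← integral_map hψ.aemeasurable hf.aestronglyMeasurable]
    exact abs_integral_sub_integral_le_mul_tvDist hf hC hfC
  exact (abs_sub_le _ _ _).trans (add_le_add hφψ' hψ')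

end TotalVariation

section Diagonal

variable {X : Type*} [MeasurableSpace X]

def TendstoCorrelation (ν : ℕ → Measure (X × X)) (μ : Measure X) : Prop :=
  ∀ f₁ f₂ : X → ℝ, Measurable f₁ → Measurable f₂ →
    (∃ C, ∀ x, |f₁ x| ≤ C) → (∃ C, ∀ x, |f₂ x| ≤ C) →
    Tendsto (fun n => ∫ p, f₁ p.1 * f₂ p.2 ∂(ν n)) atTop (𝓝 (∫ x, f₁ x * f₂ x ∂μ))

lemma TendstoCorrelation.tendsto_measureReal_prod_self {ν : ℕ → Measure (X × X)}
    {μ : Measure X} (hcorr : TendstoCorrelation ν μ) {A : Set X} (hA : MeasurableSet A) :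
    Tendsto (fun n => (ν n).real (A ×ˢ A)) atTop (𝓝 (μ.real A)) := by
  have hbdd : ∃ C, ∀ x, |A.indicator (1 : X → ℝ) x| ≤ C :=
    ⟨1, fun x => by by_cases hx : x ∈ A <;> simp [hx]⟩
  have h := hcorr _ _ (measurable_one.indicator hA) (measurable_one.indicator hA) hbdd hbdd
  have hμ : (fun x => A.indicator (1 : X → ℝ) x * A.indicator 1 x) = A.indicator 1 := by
    change A.indicator (1 : X → ℝ) * A.indicator 1 = _
    rw [← Set.inter_indicator_one, Set.inter_self]
  have hν : (fun p : X × X => A.indicator (1 : X → ℝ) p.1 * A.indicator 1 p.2)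
      = (A ×ˢ A).indicator 1 :=
    funext fun p => Set.indicator_prod_one.symm
  rw [hμ, hν, integral_indicator_one hA] at h
  exact h.congr fun n => integral_indicator_one (hA.prod hA)

lemma tendsto_measureReal_iUnion_of_hasSum {ι : Type*} {ν : ℕ → Measure X}
    [∀ n, IsProbabilityMeasure (ν n)] {S : ι → Set X} (hS : ∀ i, MeasurableSet (S i))
    (hdisj : Pairwise (Function.onFun Disjoint S)) {m : ι → ℝ} (hm : HasSum m 1)
    (hlim : ∀ i, Tendsto (fun n => (ν n).real (S i)) atTop (𝓝 (m i))) :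
    Tendsto (fun n => (ν n).real (⋃ i, S i)) atTop (𝓝 1) := by
  refine tendsto_order.2
    ⟨fun c hc => ?_, fun c hc => .of_forall fun n => measureReal_le_one.trans_lt hc⟩
  obtain ⟨F, hF⟩ := (hm.eventually (eventually_gt_nhds hc)).exists
  filter_upwards [(tendsto_finsetSum F fun i _ => hlim i).eventually (eventually_gt_nhds hF)]
    with n hn
  calc c < ∑ i ∈ F, (ν n).real (S i) := hn
    _ = (ν n).real (⋃ i ∈ F, S i) :=
      (measureReal_biUnion_finset (hdisj.set_pairwise _) fun i _ => hS i).symm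
    _ ≤ (ν n).real (⋃ i, S i) :=
      measureReal_mono (Set.iUnion₂_subset fun i _ => Set.subset_iUnion S i)

lemma hasSum_measureReal_fiber {ι : Type*} [Countable ι] (μ : Measure X) [IsProbabilityMeasure μ]
    {w : X → ι} (hw : ∀ i, MeasurableSet {x | w x = i}) :
    HasSum (fun i => μ.real {x | w x = i}) 1 := by
  have h : ∑' i, μ (w ⁻¹' {i}) = 1 := by
    rw [← measure_iUnion (pairwise_disjoint_fiber w) hw,
      Set.iUnion_eq_univ_iff.2 fun x => ⟨w x, rfl⟩, measure_univ]
  have := ENNReal.hasSum_toReal (h ▸ ENNReal.one_ne_top)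
  rwa [← ENNReal.tsum_toReal_eq fun i => measure_ne_top μ _, h, ENNReal.toReal_one] at this

lemma TendstoCorrelation.tendsto_measureReal_iUnion_fiber_prod_self {ι : Type*} [Countable ι]
    {ν : ℕ → Measure (X × X)} [∀ n, IsProbabilityMeasure (ν n)] {μ : Measure X}
    [IsProbabilityMeasure μ] (hcorr : TendstoCorrelation ν μ) {w : X → ι}
    (hw : ∀ i, MeasurableSet {x | w x = i}) :
    Tendsto (fun n => (ν n).real (⋃ i, {x | w x = i} ×ˢ {x | w x = i})) atTop (𝓝 1) :=
  tendsto_measureReal_iUnion_of_hasSum (fun i => (hw i).prod (hw i))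
    (fun _ _ hij => Set.disjoint_prod.2 (.inl (pairwise_disjoint_fiber w hij)))
    (hasSum_measureReal_fiber μ hw) fun i => hcorr.tendsto_measureReal_prod_self (hw i)

end Diagonal

section Twist

variable {Γ X : Type*} [SMul Γ X]

lemma measurable_fiberwise_smul [MeasurableSpace X] [Countable Γ] {w : X → Γ}
    (hw : ∀ γ, MeasurableSet {x | w x = γ}) (hsmul : ∀ γ : Γ, Measurable (fun x : X => γ • x)) :
    Measurable fun p : X × X => w p.1 • p.2 := by
  intro B hB
  have hpre : (fun p : X × X => w p.1 • p.2) ⁻¹' B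
      = ⋃ γ, {x | w x = γ} ×ˢ ((fun x => γ • x) ⁻¹' B) := by
    ext ⟨x, y⟩
    simp
  rw [hpre]
  exact .iUnion fun γ => (hw γ).prod (hsmul γ hB)

lemma eqOn_twist_prodMap {θ : X → X} {w : X → Γ} (hw : ∀ x, θ x = w x • x) :
    Set.EqOn (fun p : X × X => (θ p.1, w p.1 • p.2)) (fun p => (θ p.1, θ p.2))
      (⋃ γ, {x | w x = γ} ×ˢ {x | w x = γ}) := by
  intro p hp
  obtain ⟨γ, h₁, h₂⟩ : ∃ γ, w p.1 = γ ∧ w p.2 = γ := by simpa using hp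
  simp [hw p.2, h₁, h₂]

end Twist

theorem stmt19_general {Γ X : Type*} [Group Γ] [Countable Γ]
    [MeasurableSpace X] [MulAction Γ X]
    (hmeasΓ : ∀ γ : Γ, Measurable (fun x : X => γ • x))
    (μ : Measure X) [IsProbabilityMeasure μ]
    (R : X → X → Prop)
    (ν : ℕ → Measure (X × X)) (hprob : ∀ n, IsProbabilityMeasure (ν n))
    (hcorr : ∀ f₁ f₂ : X → ℝ, Measurable f₁ → Measurable f₂ →
      (∃ C, ∀ x, |f₁ x| ≤ C) → (∃ C, ∀ x, |f₂ x| ≤ C) →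
      Tendsto (fun n => ∫ p, f₁ p.1 * f₂ p.2 ∂(ν n)) atTop (𝓝 (∫ x, f₁ x * f₂ x ∂μ)))
    (hfg : ∀ θ' : X ≃ X, Measurable θ' → Measurable θ'.symm →
      MeasurePreserving θ' μ μ → (∀ᵐ x ∂μ, R x (θ' x)) →
      Tendsto (fun n =>
        tvDist (Measure.map (fun p : X × X => (θ' p.1, θ' p.2)) (ν n)) (ν n))
        atTop (𝓝 0))
    (θ : X ≃ X) (hθm : Measurable θ) (hθm' : Measurable θ.symm)
    (hθmp : MeasurePreserving θ μ μ) (hθR : ∀ x, R x (θ x))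
    (w : X → Γ) (hw : ∀ x, θ x = w x • x)
    (hwmeas : ∀ γ : Γ, MeasurableSet {x | w x = γ}) :
    atTop.liminf
        (fun n => ((ν n) (⋃ γ : Γ, {x | w x = γ} ×ˢ {x | w x = γ})).toReal) = 1 ∧
    ∀ f : X × X → ℝ, Measurable f → (∃ C, ∀ p, |f p| ≤ C) →
      Tendsto (fun n => (∫ p, f (θ p.1, w p.1 • p.2) ∂(ν n)) - ∫ p, f p ∂(ν n))
        atTop (𝓝 0) := by
  set D := ⋃ γ : Γ, {x | w x = γ} ×ˢ {x | w x = γ}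
  have hD : Tendsto (fun n => (ν n).real D) atTop (𝓝 1) :=
    TendstoCorrelation.tendsto_measureReal_iUnion_fiber_prod_self hcorr hwmeas
  refine ⟨hD.liminf_eq, fun f hf ⟨C, hC⟩ => ?_⟩
  have hDc : Tendsto (fun n => (ν n).real Dᶜ) atTop (𝓝 0) := by
    have hDm : MeasurableSet D := .iUnion fun γ => (hwmeas γ).prod (hwmeas γ)
    simpa [measureReal_compl hDm] using (tendsto_const_nhds (x := (1 : ℝ))).sub hD
  have htv := hfg θ hθm hθm' hθmp (.of_forall hθR)
  have hC' : ∀ p, |f p| ≤ max C 1 := fun p => (hC p).trans (le_max_left _ _)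
  refine squeeze_zero_norm (fun n => ?_)
    (by simpa using (hDc.const_mul (2 * max C 1)).add (htv.const_mul (max C 1)))
  exact (Real.norm_eq_abs _).trans_le <| abs_integral_comp_sub_integral_le
    ((hθm.comp measurable_fst).prodMk (measurable_fiberwise_smul hwmeas hmeasΓ))
    ((hθm.comp measurable_fst).prodMk (hθm.comp measurable_snd)) (eqOn_twist_prodMap hw) hf
    (by positivity) hC'

/-- **Step 1 of the proof of Theorem 3.1 of [Io09]:** let `Γ ↷ (X, μ)` be a free,
ergodic, measure-preserving action with orbit equivalence relation `S`, `R ⊆ S` an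
ergodic subequivalence relation, and `ν n` probability measures on `X × X` with both
marginals `μ`, satisfying the correlation condition and almost invariance under
`θ' × θ'` for every `θ'` in the full group `[R]`. Fix `θ ∈ [R]` with cocycle
`w : X → Γ`, `θ x = w x • x`, set `A_γ = {x | w x = γ}`, and
`θ̃ (x, y) = (θ x, w x • y)`. Then `liminf_n ν_n (⋃_γ A_γ × A_γ) = 1` and consequently
`∫ f ∘ θ̃ dν_n - ∫ f dν_n → 0` for every bounded Borel `f`. -/
theorem stmt19 {Γ X : Type*} [Group Γ] [Countable Γ]
    [MeasurableSpace X] [StandardBorelSpace X] [MulAction Γ X]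
    (hmeasΓ : ∀ γ : Γ, Measurable (fun x : X => γ • x))
    (μ : Measure X) [IsProbabilityMeasure μ]
    (hmp : ∀ γ : Γ, Measure.map (fun x => γ • x) μ = μ)
    (hfree : ∀ (γ : Γ) (x : X), γ • x = x → γ = 1)
    (herg : ∀ A : Set X, MeasurableSet A →
      (∀ γ : Γ, (fun x => γ • x) ⁻¹' A = A) → μ A = 0 ∨ μ A = 1)
    (R : X → X → Prop) (hReq : Equivalence R)
    (hRsub : ∀ x y, R x y → ∃ γ : Γ, γ • x = y)
    (hRmeas : MeasurableSet {p : X × X | R p.1 p.2})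
    (hRerg : ∀ A : Set X, MeasurableSet A →
      (∀ x y, R x y → (x ∈ A ↔ y ∈ A)) → μ A = 0 ∨ μ A = 1)
    (ν : ℕ → Measure (X × X)) (hprob : ∀ n, IsProbabilityMeasure (ν n))
    (h1 : ∀ n, Measure.map Prod.fst (ν n) = μ)
    (h2 : ∀ n, Measure.map Prod.snd (ν n) = μ)
    (hcorr : ∀ f₁ f₂ : X → ℝ, Measurable f₁ → Measurable f₂ →
      (∃ C, ∀ x, |f₁ x| ≤ C) → (∃ C, ∀ x, |f₂ x| ≤ C) →
      Tendsto (fun n => ∫ p, f₁ p.1 * f₂ p.2 ∂(ν n)) atTop (𝓝 (∫ x, f₁ x * f₂ x ∂μ)))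
    (hfg : ∀ θ' : X ≃ X, Measurable θ' → Measurable θ'.symm →
      MeasurePreserving θ' μ μ → (∀ᵐ x ∂μ, R x (θ' x)) →
      Tendsto (fun n =>
        tvDist (Measure.map (fun p : X × X => (θ' p.1, θ' p.2)) (ν n)) (ν n))
        atTop (𝓝 0))
    (θ : X ≃ X) (hθm : Measurable θ) (hθm' : Measurable θ.symm)
    (hθmp : MeasurePreserving θ μ μ) (hθR : ∀ x, R x (θ x))
    (w : X → Γ) (hw : ∀ x, θ x = w x • x)
    (hwmeas : ∀ γ : Γ, MeasurableSet {x | w x = γ}) :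
    atTop.liminf
        (fun n => ((ν n) (⋃ γ : Γ, {x | w x = γ} ×ˢ {x | w x = γ})).toReal) = 1 ∧
    ∀ f : X × X → ℝ, Measurable f → (∃ C, ∀ p, |f p| ≤ C) →
      Tendsto (fun n => (∫ p, f (θ p.1, w p.1 • p.2) ∂(ν n)) - ∫ p, f p ∂(ν n))
        atTop (𝓝 0) :=
  stmt19_general hmeasΓ μ R ν hprob hcorr hfg θ hθm hθm' hθmp hθR w hw hwmeas
end
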